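/- arXiv:2412.13721 — 9 statements merged into one kernel-verified Lean document; each statement's English description precedes it below -/
import Mathlib

section
/- Let G be a graph and δ : E(G) → {red, blue} a surjective edge coloring with red edge set E_r and blue edge set E_b. Then δ is a NAC-coloring if and only if the connected components of the edge-induced subgraph G[E_r] and of G[E_b] are induced subgraphs of G. -/
open SimpleGraph

def IsNACColoring {V : Type*} (G : SimpleGraph V) (δ : Sym2 V → Bool) : Prop :=
  (∃ e ∈ G.edgeSet, δ e = true) ∧ (∃ e ∈ G.edgeSet, δ e = false) ∧
  ∀ ⦃u : V⦄ (w : G.Walk u u), w.IsCycle →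
    ∀ b : Bool, (w.edges.countP fun e => δ e == b) ≠ 1

/-- The spanning subgraph of `G` consisting of the edges of color `c`. -/
def colorSubgraph {V : Type*} (G : SimpleGraph V) (δ : Sym2 V → Bool) (c : Bool) :
    SimpleGraph V :=
  SimpleGraph.fromEdgeSet {e | e ∈ G.edgeSet ∧ δ e = c}

/-! An edge `xy` together with an `x`-`y` path in a subgraph `H` not using `xy` is the same as a
cycle through `xy` whose other edges lie in `H`; this is the cycle criterion for the edge `xy` in
`H ⊔ edge x y`. With `H` the subgraph of one color, an almost monochromatic cycle is thus exactly an
edge of the other color joining two vertices of one monochromatic component. -/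

theorem List.countP_eq_one_iff_of_nodup {α : Type*} {p : α → Bool} {l : List α} (hl : l.Nodup) :
    l.countP p = 1 ↔ ∃ a ∈ l, ∀ b ∈ l, p b ↔ b = a := by
  constructor
  · intro h
    rw [List.countP_eq_length_filter, List.length_eq_one_iff] at h
    obtain ⟨a, ha⟩ := h
    have hmem : ∀ b, b ∈ l ∧ p b ↔ b = a := fun b => by
      rw [← List.mem_filter, ha, List.mem_singleton]
    exact ⟨a, ((hmem a).2 rfl).1, fun b hb => ⟨fun hpb => (hmem b).1 ⟨hb, hpb⟩,
      fun hba => ((hmem b).2 hba).2⟩⟩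
  · classical
    rintro ⟨a, ha, hp⟩
    rw [List.countP_congr (q := (· == a)) (by simpa using hp), ← List.count_eq_countP]
    exact List.count_eq_one_of_mem hl ha

namespace SimpleGraph

variable {V : Type*} {G H : SimpleGraph V}

lemma deleteEdges_sup_edge_of_not_adj {x y : V} (hxy : ¬H.Adj x y) :
    (H ⊔ edge x y).deleteEdges {s(x, y)} = H := by
  ext a b
  simp only [deleteEdges_adj, sup_adj, edge_adj, Set.mem_singleton_iff, Sym2.eq_iff]
  constructor
  · rintro ⟨hab | ⟨h, -⟩, hne⟩
    · exact hab
    · exact absurd h hne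
  · intro hab
    refine ⟨Or.inl hab, ?_⟩
    rintro (⟨rfl, rfl⟩ | ⟨rfl, rfl⟩)
    exacts [hxy hab, hxy hab.symm]

lemma exists_isCycle_mem_edges_iff (hHG : H ≤ G) {x y : V} (hxy : ¬H.Adj x y) :
    (∃ (u : V) (p : G.Walk u u), p.IsCycle ∧ s(x, y) ∈ p.edges ∧
      ∀ e ∈ p.edges, e ≠ s(x, y) → e ∈ H.edgeSet) ↔ G.Adj x y ∧ H.Reachable x y := by
  have hK := deleteEdges_sup_edge_of_not_adj hxy
  constructor
  · rintro ⟨u, p, hp, hmem, hH⟩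
    have hG : G.Adj x y := p.adj_of_mem_edges hmem
    have hpK : ∀ e ∈ p.edges, e ∈ (H ⊔ edge x y).edgeSet := by
      intro e he
      rw [edgeSet_sup, edgeSet_edge_of_ne hG.ne]
      by_cases hexy : e = s(x, y)
      · exact Or.inr hexy
      · exact Or.inl (hH e he hexy)
    obtain ⟨-, hreach⟩ := adj_and_reachable_delete_edges_iff_exists_cycle.2
      ⟨u, p.transfer _ hpK, hp.transfer hpK, by rwa [p.edges_transfer]⟩
    exact ⟨hG, hK ▸ hreach⟩
  · rintro ⟨hG, hreach⟩
    have hKG : H ⊔ edge x y ≤ G := sup_le hHG ((edge_le_iff G).2 (Or.inr hG))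
    obtain ⟨u, p, hp, hmem⟩ := adj_and_reachable_delete_edges_iff_exists_cycle.1
      ⟨Or.inr ((edge_adj _ _ _ _).2 ⟨Or.inl ⟨rfl, rfl⟩, hG.ne⟩), hK ▸ hreach⟩
    refine ⟨u, p.mapLe hKG, hp.mapLe hKG, by rwa [p.edges_mapLe_eq_edges], ?_⟩
    intro e he hexy
    rw [p.edges_mapLe_eq_edges] at he
    have := p.edges_subset_edgeSet he
    rw [edgeSet_sup, edgeSet_edge_of_ne hG.ne] at this
    exact this.resolve_right hexy

end SimpleGraph

section Coloring

variable {V : Type*} {G : SimpleGraph V} {δ : Sym2 V → Bool} {b c : Bool}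

lemma mem_edgeSet_colorSubgraph {e : Sym2 V} :
    e ∈ (colorSubgraph G δ c).edgeSet ↔ e ∈ G.edgeSet ∧ δ e = c := by
  rw [colorSubgraph, edgeSet_fromEdgeSet, Set.mem_sdiff, Set.mem_ofPred_eq, and_iff_left_iff_imp]
  exact fun h => G.not_isDiag_of_mem_edgeSet h.1

lemma colorSubgraph_adj {u v : V} :
    (colorSubgraph G δ c).Adj u v ↔ G.Adj u v ∧ δ s(u, v) = c := by
  rw [← mem_edgeSet, mem_edgeSet_colorSubgraph, mem_edgeSet]

lemma colorSubgraph_le : colorSubgraph G δ c ≤ G := fun _ _ h => (colorSubgraph_adj.1 h).1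

lemma SimpleGraph.Walk.IsTrail.countP_color_eq_one_iff {u v : V} {w : G.Walk u v}
    (hw : w.IsTrail) :
    (w.edges.countP fun e => δ e == b) = 1 ↔
      ∃ e ∈ w.edges, δ e = b ∧ ∀ e' ∈ w.edges, e' ≠ e → e' ∈ (colorSubgraph G δ (!b)).edgeSet := by
  have hcolor : ∀ e ∈ w.edges, e ∈ (colorSubgraph G δ (!b)).edgeSet ↔ δ e ≠ b := fun e he => by
    rw [mem_edgeSet_colorSubgraph, Bool.eq_not_iff]
    exact and_iff_right (w.edges_subset_edgeSet he)
  rw [List.countP_eq_one_iff_of_nodup hw.edges_nodup]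
  refine exists_congr fun e => and_congr_right fun he => ?_
  simp only [beq_iff_eq]
  constructor
  · intro h
    exact ⟨(h e he).2 rfl, fun e' he' hne => (hcolor e' he').2 fun hb => hne ((h e' he').1 hb)⟩
  · rintro ⟨hb, h⟩ e' he'
    refine ⟨fun hb' => ?_, fun he' => he' ▸ hb⟩
    by_contra hne
    exact (hcolor e' he').1 (h e' he' hne) hb'

end Coloring

/-- a surjective red-blue edge coloring is a NAC-coloring iff the connected
components of the subgraphs of red edges and of blue edges are induced subgraphs of `G`. -/
theorem isNACColoring_iff_components_induced {V : Type*} (G : SimpleGraph V)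
    (δ : Sym2 V → Bool)
    (hsurj : (∃ e ∈ G.edgeSet, δ e = true) ∧ (∃ e ∈ G.edgeSet, δ e = false)) :
    IsNACColoring G δ ↔
      ∀ (c : Bool) (u v : V), G.Adj u v → (colorSubgraph G δ c).Reachable u v →
        δ s(u, v) = c := by
  constructor
  · rintro ⟨-, -, hnac⟩ c u v huv hreach
    by_contra hne
    obtain ⟨w, p, hp, hmem, hother⟩ := (exists_isCycle_mem_edges_iff colorSubgraph_le
      (by simp [colorSubgraph_adj, hne])).2 ⟨huv, hreach⟩
    exact hnac p hp (!c) (hp.isTrail.countP_color_eq_one_iff.2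
      ⟨_, hmem, Bool.eq_not_iff.2 hne, by simpa using hother⟩)
  · intro h
    refine ⟨hsurj.1, hsurj.2, fun u w hw b hcount => ?_⟩
    obtain ⟨e, he, hb, hother⟩ := hw.isTrail.countP_color_eq_one_iff.1 hcount
    induction e using Sym2.ind with
    | h x y =>
      obtain ⟨hadj, hreach⟩ := (exists_isCycle_mem_edges_iff colorSubgraph_le
        (by simp [colorSubgraph_adj, hb])).1 ⟨u, w, hw, he, hother⟩
      simpa [hb] using h (!b) x y hadj hreach
end

section
/- A disconnected graph G has a NAC-coloring if and only if G has at least two connected components each containing at least one edge, or some connected component of G has a NAC-coloring. -/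
open SimpleGraph

/-!
Every cycle lies in a single connected component, so the cycle condition can be checked
component by component. Hence a NAC-coloring of a component, extended by one colour on all
other edges, is a NAC-coloring of `G`; so is the colouring that is red exactly on the edges of
one component, as soon as another component has an edge. Conversely, a NAC-coloring of `G`
either has a red and a blue edge in different components, or it restricts to a NAC-coloring of
the component containing both.
-/

namespace SimpleGraph

variable {V W : Type*} {G : SimpleGraph V} {H : SimpleGraph W}

def NACCycleCondition (G : SimpleGraph V) (δ : Sym2 V → Bool) : Prop :=
  ∀ ⦃u : V⦄ (w : G.Walk u u), w.IsCycle → ∀ b : Bool, (w.edges.countP fun e => δ e == b) ≠ 1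

lemma Walk.reachable_of_mem_support {u v x : V} (w : G.Walk u v) (hx : x ∈ w.support) :
    G.Reachable u x := by
  classical
  exact ⟨w.takeUntil x hx⟩

lemma Walk.IsCycle.countP_ne_one_of_forall_eq {u : V} {w : G.Walk u u} (hw : w.IsCycle)
    {δ : Sym2 V → Bool} {c : Bool} (hc : ∀ e ∈ w.edges, δ e = c) (b : Bool) :
    (w.edges.countP fun e => δ e == b) ≠ 1 := by
  by_cases hcb : c = b
  · have hall : (w.edges.countP fun e => δ e == b) = w.length := by
      rw [List.countP_eq_length.mpr fun e he => by simp [hc e he, hcb], length_edges]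
    have := hw.three_le_length
    omega
  · rw [List.countP_eq_zero.mpr fun e he => by simp [hc e he, hcb]]
    omega

lemma nacCycleCondition_const (G : SimpleGraph V) (c : Bool) :
    NACCycleCondition G fun _ => c :=
  fun _ _ hw => hw.countP_ne_one_of_forall_eq fun _ _ => rfl

lemma NACCycleCondition.comap {δ : Sym2 W → Bool} (h : NACCycleCondition H δ) {f : G →g H}
    (hf : Function.Injective f) : NACCycleCondition G (δ ∘ Sym2.map f) := by
  intro u w hw b
  have := h (w.map f) ((Walk.isCycle_map_iff_of_injective hf).mpr hw) b
  rwa [Walk.edges_map, List.countP_map] at this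

variable {S : Set V}

lemma extend_sym2Map_val_of_not_mem {α : Type*} (g : Sym2 S → α) (g' : Sym2 V → α)
    {e : Sym2 V} {a : V} (ha : a ∈ e) (haS : a ∉ S) :
    Function.extend (Sym2.map (↑)) g g' e = g' e :=
  Function.extend_apply' _ _ _ fun ⟨t, ht⟩ => haS <| by
    obtain ⟨b, -, rfl⟩ := Sym2.mem_map.mp (ht ▸ ha)
    exact b.2

lemma extend_sym2Map_val {α : Type*} (g : Sym2 S → α) (g' : Sym2 V → α) (e : Sym2 S) :
    Function.extend (Sym2.map (↑)) g g' (e.map (↑)) = g e :=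
  (Sym2.map.injective Subtype.val_injective).extend_apply g g' e

lemma Walk.map_edges_induce {u v : V} (w : G.Walk u v) (hw : ∀ x ∈ w.support, x ∈ S) :
    (w.induce S hw).edges.map (Sym2.map (↑)) = w.edges := by
  have := congrArg Walk.edges (w.map_induce hw)
  rwa [Walk.edges_map] at this

lemma NACCycleCondition.extend (hS : ∀ ⦃x y : V⦄, G.Reachable x y → x ∈ S → y ∈ S)
    {δ' : Sym2 S → Bool} (h : NACCycleCondition (G.induce S) δ') :
    NACCycleCondition G (Function.extend (Sym2.map (↑)) δ' fun _ => false) := by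
  intro x w hw b
  by_cases hx : x ∈ S
  · have hsupp : ∀ y ∈ w.support, y ∈ S := fun y hy => hS (w.reachable_of_mem_support hy) hx
    have hw' : (w.induce S hsupp).IsCycle := by
      rwa [← Walk.isCycle_map_iff_of_injective (f := (Embedding.induce S).toHom)
        Subtype.val_injective, Walk.map_induce]
    have := h (w.induce S hsupp) hw' b
    rw [← funext (extend_sym2Map_val δ' fun _ => false)] at this
    rwa [← w.map_edges_induce hsupp, List.countP_map]
  · refine hw.countP_ne_one_of_forall_eq (c := false) (fun e he => ?_) b
    induction e using Sym2.ind with | _ y z => ?_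
    refine extend_sym2Map_val_of_not_mem _ _ (Sym2.mem_mk_left y z) fun hy => hx ?_
    exact hS (w.reachable_of_mem_support (w.fst_mem_support_of_mem_edges he)).symm hy

lemma IsNACColoring.extend (hS : ∀ ⦃x y : V⦄, G.Reachable x y → x ∈ S → y ∈ S)
    {δ' : Sym2 S → Bool} (h : IsNACColoring (G.induce S) δ') :
    IsNACColoring G (Function.extend (Sym2.map (↑)) δ' fun _ => false) := by
  obtain ⟨⟨e₁, he₁, h₁⟩, ⟨e₂, he₂, h₂⟩, hcyc⟩ := h
  have hedge {e} := (Embedding.induce (G := G) S).toHom.map_mem_edgeSet (e := e)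
  exact ⟨⟨_, hedge he₁, (extend_sym2Map_val _ _ e₁).trans h₁⟩,
    ⟨_, hedge he₂, (extend_sym2Map_val _ _ e₂).trans h₂⟩, NACCycleCondition.extend hS hcyc⟩

lemma exists_isNACColoring_of_adj_of_adj_of_not_reachable {u v u' v' : V} (huv : G.Adj u v)
    (hu'v' : G.Adj u' v') (hu'u : ¬ G.Reachable u u') : ∃ δ, IsNACColoring G δ := by
  let S := {w | G.Reachable u w}
  have hS : ∀ ⦃x y : V⦄, G.Reachable x y → x ∈ S → y ∈ S := fun _ _ hxy hx => hx.trans hxy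
  refine ⟨Function.extend (Sym2.map ((↑) : S → V)) (fun _ => true) fun _ => false,
    ⟨s(u, v), huv, ?_⟩, ⟨s(u', v'), hu'v', ?_⟩, (nacCycleCondition_const _ true).extend hS⟩
  · exact extend_sym2Map_val _ _ s(⟨u, .rfl⟩, ⟨v, huv.reachable⟩)
  · exact extend_sym2Map_val_of_not_mem _ _ (Sym2.mem_mk_left u' v') hu'u

end SimpleGraph

theorem disconnected_hasNAC_iff_general {V : Type*} (G : SimpleGraph V) :
    (∃ δ : Sym2 V → Bool, IsNACColoring G δ) ↔
      ((∃ u v u' v' : V, G.Adj u v ∧ G.Adj u' v' ∧ ¬ G.Reachable u u') ∨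
        (∃ (v : V) (δ' : Sym2 {w | G.Reachable v w} → Bool),
          IsNACColoring (G.induce {w | G.Reachable v w}) δ')) := by
  constructor
  · rintro ⟨δ, ⟨e₁, he₁, h₁⟩, ⟨e₂, he₂, h₂⟩, hcyc⟩
    induction e₁ using Sym2.ind with | _ u v => ?_
    induction e₂ using Sym2.ind with | _ u' v' => ?_
    by_cases hu'u : G.Reachable u u'
    · have hv : G.Reachable u v := (he₁ : G.Adj u v).reachable
      have hv' : G.Reachable u v' := hu'u.trans (he₂ : G.Adj u' v').reachable
      exact .inr ⟨u, δ ∘ Sym2.map (↑), ⟨s(⟨u, .rfl⟩, ⟨v, hv⟩), he₁, h₁⟩,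
        ⟨s(⟨u', hu'u⟩, ⟨v', hv'⟩), he₂, h₂⟩,
        NACCycleCondition.comap hcyc (f := (Embedding.induce {w | G.Reachable u w}).toHom)
          Subtype.val_injective⟩
    · exact .inl ⟨u, v, u', v', he₁, he₂, hu'u⟩
  · rintro (⟨u, v, u', v', huv, hu'v', hu'u⟩ | ⟨v, δ', hδ'⟩)
    · exact exists_isNACColoring_of_adj_of_adj_of_not_reachable huv hu'v' hu'u
    · exact ⟨_, hδ'.extend fun _ _ hxy hx => hx.trans hxy⟩

/-- a disconnected graph `G` has a NAC-coloring iff it has two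
connected components each containing an edge, or some connected component of `G`
(as an induced subgraph) has a NAC-coloring. -/
theorem disconnected_hasNAC_iff {V : Type*} (G : SimpleGraph V)
    (hdisc : ¬ G.Preconnected) :
    (∃ δ : Sym2 V → Bool, IsNACColoring G δ) ↔
      ((∃ u v u' v' : V, G.Adj u v ∧ G.Adj u' v' ∧ ¬ G.Reachable u u') ∨
        (∃ (v : V) (δ' : Sym2 {w | G.Reachable v w} → Bool),
          IsNACColoring (G.induce {w | G.Reachable v w}) δ')) :=
  disconnected_hasNAC_iff_general G
end

section
/- If G₁, ..., G_k are the blocks (bridges and maximal 2-connected subgraphs) of a connected graph G, then the set of NAC-colorings of G equals the NAC-product of G₁, ..., G_k, i.e., a surjective red-blue edge coloring of G is a NAC-coloring if and only if its restriction to each block is a NAC-coloring of the block or monochromatic. -/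
open SimpleGraph

/-- Two edges of `G` lie in the same block iff they are equal or lie on a common cycle.
(The blocks of a connected graph are exactly the classes of this relation on edges.) -/
def sameBlock {V : Type*} (G : SimpleGraph V) (e₁ e₂ : Sym2 V) : Prop :=
  e₁ ∈ G.edgeSet ∧ e₂ ∈ G.edgeSet ∧
    (e₁ = e₂ ∨ ∃ (u : V) (w : G.Walk u u), w.IsCycle ∧ e₁ ∈ w.edges ∧ e₂ ∈ w.edges)

/-- The block of `G` containing the edge `e`, as a subgraph of `G`. -/
def blockOf {V : Type*} (G : SimpleGraph V) (e : Sym2 V) : SimpleGraph V :=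
  SimpleGraph.fromEdgeSet {f | sameBlock G e f}

lemma blockOf_le {V : Type*} (G : SimpleGraph V) (e : Sym2 V) : blockOf G e ≤ G := by
  intro u v h
  rw [blockOf, fromEdgeSet_adj] at h
  exact h.1.2.1

lemma mem_blockOf_edgeSet {V : Type*} {G : SimpleGraph V} {e f : Sym2 V}
    (h : sameBlock G e f) : f ∈ (blockOf G e).edgeSet := by
  rw [blockOf, edgeSet_fromEdgeSet]
  exact ⟨h, G.not_isDiag_of_mem_edgeSet h.2.1⟩

/-- for a connected graph `G`, a surjective red-blue edge coloring is a
NAC-coloring of `G` iff its restriction to every block of `G` is a NAC-coloring of the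
block or monochromatic. -/
theorem isNACColoring_iff_blocks {V : Type*} (G : SimpleGraph V) (hG : G.Connected)
    (δ : Sym2 V → Bool)
    (hsurj : (∃ e ∈ G.edgeSet, δ e = true) ∧ (∃ e ∈ G.edgeSet, δ e = false)) :
    IsNACColoring G δ ↔
      ∀ e ∈ G.edgeSet,
        IsNACColoring (blockOf G e) δ ∨
          ∃ c : Bool, ∀ f ∈ (blockOf G e).edgeSet, δ f = c := by
  constructor
  · intro h e he
    by_cases hmono : ∃ c : Bool, ∀ f ∈ (blockOf G e).edgeSet, δ f = c
    · exact Or.inr hmono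
    · left
      push_neg at hmono
      obtain ⟨f₁, hf₁, hδ₁⟩ := hmono true
      obtain ⟨f₂, hf₂, hδ₂⟩ := hmono false
      refine ⟨⟨f₂, hf₂, ?_⟩, ⟨f₁, hf₁, ?_⟩, ?_⟩
      · simpa using hδ₂
      · simpa using hδ₁
      · intro u w hw b
        have hsub : ∀ g ∈ w.edges, g ∈ G.edgeSet := fun g hg =>
          edgeSet_mono (blockOf_le G e) (w.edges_subset_edgeSet hg)
        have := h.2.2 (w.transfer G hsub) (hw.transfer hsub) b
        rwa [SimpleGraph.Walk.edges_transfer] at this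
  · intro h
    refine ⟨hsurj.1, hsurj.2, ?_⟩
    intro u w hw b
    -- all edges of the cycle lie in one block
    have hlen : w.edges.length = w.length := w.length_edges
    have h3 := hw.three_le_length
    obtain ⟨e, he⟩ : ∃ e, e ∈ w.edges := by
      cases hq : w.edges with
      | nil => rw [hq] at hlen; simp at hlen; omega
      | cons a l => exact ⟨a, by simp [hq]⟩
    have heG : e ∈ G.edgeSet := w.edges_subset_edgeSet he
    have hsub : ∀ g ∈ w.edges, g ∈ (blockOf G e).edgeSet := by
      intro g hg
      exact mem_blockOf_edgeSet ⟨heG, w.edges_subset_edgeSet hg, Or.inr ⟨u, w, hw, he, hg⟩⟩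
    rcases h e heG with hnac | ⟨c, hc⟩
    · have := hnac.2.2 (w.transfer _ hsub) (hw.transfer hsub) b
      rwa [SimpleGraph.Walk.edges_transfer] at this
    · have hall : ∀ g ∈ w.edges, δ g = c := fun g hg => hc g (hsub g hg)
      by_cases hb : b = c
      · subst hb
        have : (w.edges.countP fun g => δ g == b) = w.edges.length := by
          apply List.countP_eq_length.2
          intro g hg
          simp [hall g hg]
        rw [this, hlen]
        omega
      · have : (w.edges.countP fun g => δ g == b) = 0 := by
          apply List.countP_eq_zero.2
          intro g hg
          simp [hall g hg, hb, Ne.symm hb]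
        simp [this]
end

section
/- Let ∼ be a NAC-valid equivalence relation on the edges of a graph G. Define e₁ ∼' e₂ if and only if e₁ ∼ e₂ or there exists a cycle C in G containing both e₁ and e₂ such that all other edges of C lie in the same equivalence class of ∼. Then the reflexive-transitive closure of ∼' is a NAC-valid relation on G. -/
open SimpleGraph

/-- A relation on edges is NAC-valid if related edges get equal colors in every
NAC-coloring. -/
def NACValid {V : Type*} (G : SimpleGraph V) (r : Sym2 V → Sym2 V → Prop) : Prop :=
  ∀ δ : Sym2 V → Bool, IsNACColoring G δ → ∀ e₁ e₂, r e₁ e₂ → δ e₁ = δ e₂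

/-- if `r` is a NAC-valid equivalence relation, then the
reflexive-transitive closure of the relation `r'` (relating `e₁, e₂` iff `r e₁ e₂`
or some cycle contains both, all its other edges lying in one class of `r`)
is NAC-valid. -/
theorem reflTransGen_NACValid {V : Type*} (G : SimpleGraph V)
    (r : Sym2 V → Sym2 V → Prop) (hequiv : Equivalence r) (hr : NACValid G r) :
    NACValid G (Relation.ReflTransGen (fun e₁ e₂ =>
      r e₁ e₂ ∨ ∃ (u : V) (w : G.Walk u u), w.IsCycle ∧ e₁ ∈ w.edges ∧ e₂ ∈ w.edges ∧
        ∀ f ∈ w.edges, ∀ f' ∈ w.edges, f ≠ e₁ → f ≠ e₂ → f' ≠ e₁ → f' ≠ e₂ →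
          r f f')) := by

  classical
  intro δ hδ e₁ e₂ h
  induction h with
  | refl => rfl
  | tail _ hstep ih =>
    rename_i b c _
    refine ih.trans ?_
    rcases hstep with hrb | ⟨u, w, hw, hb, hc, hall⟩
    · exact hr δ hδ _ _ hrb
    · by_cases hbc : b = c
      · rw [hbc]
      by_contra hne
      have hδc : δ c = !(δ b) := by
        cases hδb : δ b <;> cases hδc : δ c <;> simp_all
      have hnd : w.edges.Nodup := hw.edges_nodup
      -- find the color b0 and edge e0 such that (δ x == b0) ↔ (x = e0) on w.edges
      have key : ∃ (b0 : Bool) (e0 : Sym2 V), e0 ∈ w.edges ∧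
          ∀ x ∈ w.edges, (δ x == b0) = (x == e0) := by
        by_cases hex : ∃ f ∈ w.edges, f ≠ b ∧ f ≠ c
        · obtain ⟨f, hf, hfb, hfc⟩ := hex
          have hsame : ∀ g ∈ w.edges, g ≠ b → g ≠ c → δ g = δ f :=
            fun g hg hgb hgc => hr δ hδ g f (hall g hg f hf hgb hgc hfb hfc)
          cases hcase : δ f == δ b with
          | true =>
            refine ⟨!(δ b), c, hc, fun x hx => ?_⟩
            by_cases hxb : x = b
            · subst hxb
              simp [show (x ≠ c) from hbc, hbc]
            by_cases hxc : x = c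
            · subst hxc; simp [hδc]
            · have := hsame x hx hxb hxc
              have hfb' : δ f = δ b := by simpa using hcase
              simp [this, hfb', hxc]
          | false =>
            refine ⟨δ b, b, hb, fun x hx => ?_⟩
            by_cases hxb : x = b
            · subst hxb; simp
            by_cases hxc : x = c
            · subst hxc
              simp [hδc, Ne.symm hbc, hxb]
            · have := hsame x hx hxb hxc
              have hfb' : δ f ≠ δ b := by simpa using hcase
              simp [this, hxb]
              cases hdb : δ b <;> cases hdf : δ f <;> simp_all
        · push_neg at hex
          refine ⟨δ b, b, hb, fun x hx => ?_⟩
          by_cases hxb : x = b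
          · subst hxb; simp
          · have hxc : x = c := by
              by_contra hxc
              exact hxc (hex x hx hxb)
            subst hxc
            simp [hδc, hxb]
      obtain ⟨b0, e0, he0, hkey⟩ := key
      have hcount : (w.edges.countP fun e => δ e == b0) = 1 := by
        have : (w.edges.countP fun e => δ e == b0) = w.edges.countP (· == e0) := by
          apply List.countP_congr
          intro x hx
          simp only [hkey x hx]
        rw [this]
        exact List.count_eq_one_of_mem hnd he0
      exact hδ.2.2 w hw b0 hcount
end

section
/- The equivalence relation on the edge set of a graph G generated by the relation '△', where e₁ △ e₂ if and only if there exists a 3-cycle of G containing both e₁ and e₂, is NAC-valid: any two edges in the same △-connected component receive the same color under every NAC-coloring of G. -/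
open SimpleGraph

/-- Two edges are △-related iff some triangle of `G` contains both. -/
def triRel {V : Type*} (G : SimpleGraph V) (e₁ e₂ : Sym2 V) : Prop :=
  ∃ a b c : V, G.Adj a b ∧ G.Adj b c ∧ G.Adj c a ∧
    (e₁ = s(a, b) ∨ e₁ = s(b, c) ∨ e₁ = s(c, a)) ∧
    (e₂ = s(a, b) ∨ e₂ = s(b, c) ∨ e₂ = s(c, a))

lemma triangle_same_color {V : Type*} (G : SimpleGraph V) (δ : Sym2 V → Bool)
    (hδ : IsNACColoring G δ) {a b c : V} (hab : G.Adj a b) (hbc : G.Adj b c)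
    (hca : G.Adj c a) : δ s(a,b) = δ s(b,c) ∧ δ s(b,c) = δ s(c,a) := by
  set w : G.Walk a a := Walk.cons hab (Walk.cons hbc (Walk.cons hca Walk.nil))
  have hcyc : w.IsCycle := by
    constructor
    constructor
    · simp only [Walk.isTrail_def, w, Walk.edges_cons, Walk.edges_nil]
      simp [List.Nodup]
      refine ⟨⟨?_, ?_⟩, ?_⟩
      · exact ⟨fun h _ => hab.ne h, hca.ne'⟩
      · exact ⟨fun _ h => hab.ne h.symm, hbc.ne⟩
      · exact ⟨fun _ h => hca.ne h, fun h => hab.ne h.symm⟩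
    · simp [w]
    · simp [w, List.Nodup]
      exact ⟨⟨hbc.ne, fun h => hab.ne h.symm⟩, fun h => hca.ne h⟩
  have hedges : w.edges = [s(a,b), s(b,c), s(c,a)] := by simp [w]
  by_contra hcon
  have key : ∀ x y z : Bool, ¬(x = y ∧ y = z) → ∃ v : Bool,
      ((if x == v then 1 else 0) + ((if y == v then 1 else 0) + (if z == v then 1 else 0)) : Nat) = 1 := by
    decide
  rcases key _ _ _ hcon with ⟨v, hv⟩
  refine hδ.2.2 w hcyc v ?_
  simp only [hedges, List.countP_cons, List.countP_nil, beq_iff_eq] at hv ⊢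
  omega

/-- the equivalence relation generated by △ is NAC-valid: edges in the
same △-connected component receive the same color in every NAC-coloring. -/
theorem triRel_NACValid {V : Type*} (G : SimpleGraph V) (δ : Sym2 V → Bool)
    (hδ : IsNACColoring G δ) (e₁ e₂ : Sym2 V)
    (h : Relation.ReflTransGen (triRel G) e₁ e₂) :
    δ e₁ = δ e₂ := by
  induction h with
  | refl => rfl
  | tail _ hstep ih =>
    obtain ⟨a, b, c, hab, hbc, hca, hx, hy⟩ := hstep
    obtain ⟨h1, h2⟩ := triangle_same_color G δ hδ hab hbc hca
    rw [ih]
    rcases hx with rfl | rfl | rfl <;> rcases hy with rfl | rfl | rfl <;>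
      simp_all
end

section
/- If a connected graph G has a stable cut, then G has a NAC-coloring. -/
open SimpleGraph

/-!
Let `A` be the vertex set of a component of `G - S` and colour an edge red (`true`) iff it
meets `A`. Every vertex of a cycle lies on two distinct edges of the cycle. A cycle with a
single red edge would contain a vertex of `A`, whose two cycle edges are both red. A cycle with
a single blue edge `ac` has `a, c ∉ A`, and each of `a, c` lies on a second, hence red, cycle
edge, so both are neighbours of `A` outside `A`, i.e. lie in `S`; this contradicts the
stability of `S`.
-/

lemma List.eq_of_countP_eq_one {α : Type*} {l : List α} {p : α → Bool} (h : l.countP p = 1)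
    {a b : α} (ha : a ∈ l) (hb : b ∈ l) (hpa : p a) (hpb : p b) : a = b := by
  rw [List.countP_eq_length_filter, List.length_eq_one_iff] at h
  obtain ⟨x, hx⟩ := h
  have ha' : a ∈ l.filter p := List.mem_filter.2 ⟨ha, hpa⟩
  have hb' : b ∈ l.filter p := List.mem_filter.2 ⟨hb, hpb⟩
  rw [hx, List.mem_singleton] at ha' hb'
  rw [ha', hb']

namespace SimpleGraph

variable {V : Type*} {G : SimpleGraph V}

lemma Walk.IsCycle.exists_ne_edges_of_mem_support [DecidableEq V] {u v : V} {w : G.Walk u u}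
    (hw : w.IsCycle) (hv : v ∈ w.support) :
    ∃ e₁ ∈ w.edges, ∃ e₂ ∈ w.edges, e₁ ≠ e₂ ∧ v ∈ e₁ ∧ v ∈ e₂ := by
  set c := w.rotate v hv
  have hc : c.IsCycle := hw.rotate hv
  have hperm := (w.rotate_edges v hv).perm
  refine ⟨s(v, c.snd), hperm.mem_iff.1 (c.mk_start_snd_mem_edges hc.not_nil),
    s(c.penultimate, v), hperm.mem_iff.1 (c.mk_penultimate_end_mem_edges hc.not_nil), ?_,
    Sym2.mem_mk_left _ _, Sym2.mem_mk_right _ _⟩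
  have := hc.snd_ne_penultimate
  rw [Ne, Sym2.eq_iff]
  rintro (⟨hpen, hsnd⟩ | ⟨-, hsnd⟩)
  exacts [this (hsnd.trans hpen), this hsnd]

def outerBoundary (G : SimpleGraph V) (A : Set V) : Set V :=
  {v | v ∉ A ∧ ∃ a ∈ A, G.Adj v a}

open Classical in
noncomputable def meetsColoring (A : Set V) (e : Sym2 V) : Bool :=
  decide (∃ x ∈ e, x ∈ A)

variable {A : Set V}

@[simp]
lemma meetsColoring_eq_true {e : Sym2 V} : meetsColoring A e = true ↔ ∃ x ∈ e, x ∈ A := by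
  simp [meetsColoring]

@[simp]
lemma meetsColoring_eq_false {e : Sym2 V} : meetsColoring A e = false ↔ ∀ x ∈ e, x ∉ A := by
  simp [meetsColoring]

lemma Walk.IsCycle.countP_meetsColoring_true_ne_one {u : V} {w : G.Walk u u} (hw : w.IsCycle) :
    (w.edges.countP fun e => meetsColoring A e == true) ≠ 1 := by
  classical
  intro hone
  obtain ⟨e₀, he₀, hred⟩ := List.countP_pos_iff.1 (hone ▸ Nat.one_pos)
  obtain ⟨x, hxe₀, hxA⟩ := meetsColoring_eq_true.1 (beq_iff_eq.1 hred)
  obtain ⟨y, rfl⟩ := Sym2.mem_iff_exists.1 hxe₀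
  obtain ⟨e₁, he₁, e₂, he₂, hne, hx₁, hx₂⟩ :=
    hw.exists_ne_edges_of_mem_support (w.fst_mem_support_of_mem_edges he₀)
  exact hne <| List.eq_of_countP_eq_one hone he₁ he₂
    (by simpa using ⟨x, hx₁, hxA⟩) (by simpa using ⟨x, hx₂, hxA⟩)

lemma Walk.IsCycle.mem_outerBoundary_of_countP_false_eq_one {u v : V} {w : G.Walk u u}
    (hw : w.IsCycle) (hone : (w.edges.countP fun e => meetsColoring A e == false) = 1)
    (hv : v ∈ w.support) (hvA : v ∉ A) : v ∈ outerBoundary G A := by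
  classical
  obtain ⟨e₁, he₁, e₂, he₂, hne, hv₁, hv₂⟩ := hw.exists_ne_edges_of_mem_support hv
  obtain ⟨e, he, hve, hred⟩ : ∃ e ∈ w.edges, v ∈ e ∧ meetsColoring A e = true := by
    by_contra! hblue
    exact hne <| List.eq_of_countP_eq_one hone he₁ he₂
      (by simpa using hblue e₁ he₁ hv₁) (by simpa using hblue e₂ he₂ hv₂)
  obtain ⟨a, hae, haA⟩ := meetsColoring_eq_true.1 hred
  have hva : v ≠ a := fun h => hvA (h ▸ haA)
  rw [(Sym2.mem_and_mem_iff hva).1 ⟨hve, hae⟩] at he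
  exact ⟨hvA, a, haA, w.adj_of_mem_edges he⟩

lemma Walk.IsCycle.countP_meetsColoring_false_ne_one (hA : G.IsIndepSet (outerBoundary G A))
    {u : V} {w : G.Walk u u} (hw : w.IsCycle) :
    (w.edges.countP fun e => meetsColoring A e == false) ≠ 1 := by
  intro hone
  obtain ⟨e₀, he₀, hblue⟩ := List.countP_pos_iff.1 (hone ▸ Nat.one_pos)
  induction e₀ using Sym2.ind with | _ a c => ?_
  have hout := meetsColoring_eq_false.1 (beq_iff_eq.1 hblue)
  have hac := w.adj_of_mem_edges he₀
  exact hA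
    (hw.mem_outerBoundary_of_countP_false_eq_one hone (w.fst_mem_support_of_mem_edges he₀)
      (hout a (Sym2.mem_mk_left a c)))
    (hw.mem_outerBoundary_of_countP_false_eq_one hone (w.snd_mem_support_of_mem_edges he₀)
      (hout c (Sym2.mem_mk_right a c)))
    hac.ne hac

theorem isNACColoring_meetsColoring (hG : G.Preconnected) {a b : V} (ha : a ∈ A)
    (hb : b ∉ A ∪ outerBoundary G A) (hA : G.IsIndepSet (outerBoundary G A)) :
    IsNACColoring G (meetsColoring A) := by
  have hab : a ≠ b := fun h => hb (.inl (h ▸ ha))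
  obtain ⟨p⟩ := hG a b
  obtain ⟨q⟩ := hG b a
  have hred : meetsColoring A s(a, p.snd) = true :=
    meetsColoring_eq_true.2 ⟨a, Sym2.mem_mk_left _ _, ha⟩
  have hblue : meetsColoring A s(b, q.snd) = false := by
    have hadj := q.adj_snd (q.not_nil_of_ne hab.symm)
    refine meetsColoring_eq_false.2 fun x hx hxA => ?_
    rcases Sym2.mem_iff.1 hx with rfl | rfl
    · exact hb (.inl hxA)
    · exact hb (.inr ⟨fun hbA => hb (.inl hbA), _, hxA, hadj⟩)
  refine ⟨⟨_, p.adj_snd (p.not_nil_of_ne hab), hred⟩,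
    ⟨_, q.adj_snd (q.not_nil_of_ne hab.symm), hblue⟩, fun u w hw b => ?_⟩
  cases b
  exacts [hw.countP_meetsColoring_false_ne_one hA, hw.countP_meetsColoring_true_ne_one]

lemma outerBoundary_reachableSet_subset (S : Set V) (u : ↥Sᶜ) :
    outerBoundary G {x | ∃ h : x ∈ Sᶜ, (G.induce Sᶜ).Reachable u ⟨x, h⟩} ⊆ S := by
  rintro v ⟨hvA, x, ⟨hxS, hux⟩, hvx⟩
  by_contra hvS
  exact hvA ⟨hvS, hux.trans (Adj.reachable (G := G.induce Sᶜ) hvx.symm)⟩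

end SimpleGraph

/-- a connected graph with a stable cut has a NAC-coloring.
`S` is a stable (independent) set and removing it disconnects the graph. -/
theorem stableCut_hasNAC {V : Type*} (G : SimpleGraph V) (hG : G.Connected)
    (S : Set V)
    (hstable : ∀ u ∈ S, ∀ v ∈ S, ¬ G.Adj u v)
    (hcut : ∃ u v : ↥(Sᶜ), ¬ (G.induce Sᶜ).Reachable u v) :
    ∃ δ : Sym2 V → Bool, IsNACColoring G δ := by
  obtain ⟨u, v, huv⟩ := hcut
  set A := {x | ∃ h : x ∈ Sᶜ, (G.induce Sᶜ).Reachable u ⟨x, h⟩}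
  have hbd : outerBoundary G A ⊆ S := outerBoundary_reachableSet_subset S u
  have huA : ↑u ∈ A := ⟨u.2, .refl _⟩
  have hvA : ↑v ∉ A ∪ outerBoundary G A := by
    rintro (⟨_, hv⟩ | hv)
    exacts [huv hv, v.2 (hbd hv)]
  exact ⟨_, isNACColoring_meetsColoring hG.preconnected huA hvA
    fun x hx y hy _ => hstable x (hbd hx) y (hbd hy)⟩
end

section
/- The 3-prism graph (the complement of the 6-cycle, equivalently two triangles joined by a perfect matching) has exactly one NAC-coloring up to swapping the two colors: the coloring in which both triangles are one color and the three connecting matching edges are the other color. -/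
open SimpleGraph

/-- The 3-prism graph: two triangles 012 and 345 joined by the matching 03, 14, 25. -/
def prism : SimpleGraph (Fin 6) :=
  SimpleGraph.fromEdgeSet
    {s(0, 1), s(1, 2), s(0, 2), s(3, 4), s(4, 5), s(3, 5), s(0, 3), s(1, 4), s(2, 5)}

/-- The coloring of the 3-prism with both triangles colored `true` and the
matching edges colored `false`. -/
def prismColoring : Sym2 (Fin 6) → Bool := fun e =>
  decide (e ∈ ({s(0, 1), s(1, 2), s(0, 2), s(3, 4), s(4, 5), s(3, 5)} :
    Finset (Sym2 (Fin 6))))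

/-- The edges of the prism, as a finset. -/
def prismE : Finset (Sym2 (Fin 6)) :=
  {s(0, 1), s(1, 2), s(0, 2), s(3, 4), s(4, 5), s(3, 5), s(0, 3), s(1, 4), s(2, 5)}

lemma prism_adj (u v : Fin 6) : prism.Adj u v ↔ s(u, v) ∈ prismE := by
  simp [prism, prismE, SimpleGraph.fromEdgeSet_adj]
  fin_cases u <;> fin_cases v <;> decide

lemma prism_mem_edgeSet (e : Sym2 (Fin 6)) : e ∈ prism.edgeSet ↔ e ∈ prismE := by
  induction e using Sym2.ind with
  | _ u v => rw [SimpleGraph.mem_edgeSet]; exact prism_adj u v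

lemma padj (u v : Fin 6) (h : s(u, v) ∈ prismE) : prism.Adj u v := (prism_adj u v).2 h

/-- Which side of the prism a vertex lies on. -/
def prismSide (v : Fin 6) : Bool := decide (v.val < 3)

lemma color_side (u v : Fin 6) (h : s(u, v) ∈ prismE) :
    (prismColoring s(u, v) == false) = (prismSide u != prismSide v) := by
  revert h; revert u v; decide

lemma prism_parity (u v : Fin 6) (w : prism.Walk u v) :
    (w.edges.countP fun e => prismColoring e == false) % 2
      = (prismSide u != prismSide v).toNat := by
  induction w with
  | nil => simp
  | cons h p ih =>
    rename_i a b c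
    rw [Walk.edges_cons, List.countP_cons]
    have hE : s(a, b) ∈ prismE := (prism_mem_edgeSet _).1 (prism.mem_edgeSet.2 h)
    rw [Nat.add_mod, ih, color_side a b hE]
    cases hab : prismSide a <;> cases hbb : prismSide b <;> cases hcb : prismSide c <;>
      simp [hab, hbb, hcb]

lemma triangle_count (u a b : Fin 6) (h1 : s(u, a) ∈ prismE) (h2 : s(a, b) ∈ prismE)
    (h3 : s(b, u) ∈ prismE) :
    ([s(u, a), s(a, b), s(b, u)].countP fun e => prismColoring e == true) ≠ 1 := by
  revert h1 h2 h3; revert u a b; decide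

/-- The standard prism coloring satisfies the cycle condition of NAC-colorings. -/
lemma prism_NAC : ∀ ⦃u : Fin 6⦄ (w : prism.Walk u u), w.IsCycle →
    ∀ b : Bool, (w.edges.countP fun e => prismColoring e == b) ≠ 1 := by
  intro u w hw b
  have hpar := prism_parity u u w
  simp only [bne_self_eq_false, Bool.toNat_false] at hpar
  cases b with
  | false => omega
  | true =>
    intro hone
    have hnodup : w.edges.Nodup := hw.edges_nodup
    have key : ∀ x ∈ prismE, (prismColoring x == false) = true →
        x ∈ ({s(0, 3), s(1, 4), s(2, 5)} : Finset (Sym2 (Fin 6))) := by decide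
    have hsub : ∀ x ∈ w.edges.filter (fun e => prismColoring e == false),
        x ∈ ({s(0, 3), s(1, 4), s(2, 5)} : Finset (Sym2 (Fin 6))) := by
      intro x hx
      rw [List.mem_filter] at hx
      exact key x ((prism_mem_edgeSet x).1 (w.edges_subset_edgeSet hx.1)) hx.2
    have hle : (w.edges.countP fun e => prismColoring e == false) ≤ 3 := by
      rw [List.countP_eq_length_filter]
      calc (w.edges.filter (fun e => prismColoring e == false)).length
          = (w.edges.filter (fun e => prismColoring e == false)).toFinset.card := by
            rw [List.toFinset_card_of_nodup (hnodup.filter _)]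
        _ ≤ ({s(0, 3), s(1, 4), s(2, 5)} : Finset (Sym2 (Fin 6))).card :=
            Finset.card_le_card (fun x hx => hsub x (List.mem_toFinset.1 hx))
        _ ≤ 3 := by decide
    have hlen : w.edges.length = (w.edges.countP fun e => prismColoring e == true)
        + (w.edges.countP fun e => prismColoring e == false) := by
      rw [List.length_eq_countP_add_countP (fun e => prismColoring e == true)]
      congr 1
      apply List.countP_congr
      intro x _
      cases prismColoring x <;> simp
    have h3le : 3 ≤ w.length := hw.three_le_length
    rw [Walk.length_edges] at hlen
    have hlen3 : w.length = 3 := by omega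
    rw [← Walk.length_edges] at hlen3
    clear hpar hle hlen h3le hsub key
    cases w with
    | nil => simp at hlen3
    | cons h1 p =>
      cases p with
      | nil => simp at hlen3
      | cons h2 q =>
        cases q with
        | nil => simp at hlen3
        | cons h3 r =>
          cases r with
          | nil =>
            simp only [Walk.edges_cons, Walk.edges_nil, List.countP_cons, List.countP_nil] at hone
            have e1 := (prism_adj _ _).1 h1
            have e2 := (prism_adj _ _).1 h2
            have e3 := (prism_adj _ _).1 h3
            exact triangle_count _ _ _ e1 e2 e3 (by
              simp only [List.countP_cons, List.countP_nil]; omega)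
          | cons h4 s => simp at hlen3

section Cycles

def cw1 : prism.Walk 0 0 :=
  .cons (padj 0 1 (by decide)) (.cons (padj 1 2 (by decide))
    (.cons (padj 2 0 (by decide)) .nil))
def cw2 : prism.Walk 3 3 :=
  .cons (padj 3 4 (by decide)) (.cons (padj 4 5 (by decide))
    (.cons (padj 5 3 (by decide)) .nil))
def cw3 : prism.Walk 0 0 :=
  .cons (padj 0 1 (by decide)) (.cons (padj 1 4 (by decide))
    (.cons (padj 4 3 (by decide)) (.cons (padj 3 0 (by decide)) .nil)))
def cw4 : prism.Walk 1 1 :=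
  .cons (padj 1 2 (by decide)) (.cons (padj 2 5 (by decide))
    (.cons (padj 5 4 (by decide)) (.cons (padj 4 1 (by decide)) .nil)))
def cw5 : prism.Walk 0 0 :=
  .cons (padj 0 2 (by decide)) (.cons (padj 2 5 (by decide))
    (.cons (padj 5 3 (by decide)) (.cons (padj 3 0 (by decide)) .nil)))

lemma cw1_cyc : cw1.IsCycle := by
  rw [SimpleGraph.Walk.isCycle_def]
  refine ⟨⟨?_⟩, by simp [cw1], ?_⟩ <;> simp [cw1]
lemma cw2_cyc : cw2.IsCycle := by
  rw [SimpleGraph.Walk.isCycle_def]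
  refine ⟨⟨?_⟩, by simp [cw2], ?_⟩ <;> simp [cw2]
lemma cw3_cyc : cw3.IsCycle := by
  rw [SimpleGraph.Walk.isCycle_def]
  refine ⟨⟨?_⟩, by simp [cw3], ?_⟩ <;> simp [cw3]
lemma cw4_cyc : cw4.IsCycle := by
  rw [SimpleGraph.Walk.isCycle_def]
  refine ⟨⟨?_⟩, by simp [cw4], ?_⟩ <;> simp [cw4]
lemma cw5_cyc : cw5.IsCycle := by
  rw [SimpleGraph.Walk.isCycle_def]
  refine ⟨⟨?_⟩, by simp [cw5], ?_⟩ <;> simp [cw5]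

end Cycles

set_option maxHeartbeats 1600000 in
set_option synthInstance.maxHeartbeats 1000000 in
set_option synthInstance.maxSize 5000 in
set_option maxRecDepth 20000 in
/-- the 3-prism has exactly one NAC-coloring up to swapping the colors,
namely the one coloring both triangles by one color and the matching by the other. -/
theorem prism_unique_NAC (δ : Sym2 (Fin 6) → Bool) :
    IsNACColoring prism δ ↔
      ((∀ e ∈ prism.edgeSet, δ e = prismColoring e) ∨
        (∀ e ∈ prism.edgeSet, δ e = !(prismColoring e))) := by
  constructor
  · rintro ⟨⟨et, het, hett⟩, ⟨ef, hef, heff⟩, hcyc⟩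
    have h1 := hcyc cw1 cw1_cyc
    have h2 := hcyc cw2 cw2_cyc
    have h3 := hcyc cw3 cw3_cyc
    have h4 := hcyc cw4 cw4_cyc
    have h5 := hcyc cw5 cw5_cyc
    simp only [cw1, cw2, cw3, cw4, cw5, Walk.edges_cons, Walk.edges_nil,
      List.countP_cons, List.countP_nil] at h1 h2 h3 h4 h5
    rw [show s((2 : Fin 6), (0 : Fin 6)) = s(0, 2) from Sym2.eq_swap] at h1
    rw [show s((5 : Fin 6), (3 : Fin 6)) = s(3, 5) from Sym2.eq_swap] at h2 h5
    rw [show s((4 : Fin 6), (3 : Fin 6)) = s(3, 4) from Sym2.eq_swap,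
        show s((3 : Fin 6), (0 : Fin 6)) = s(0, 3) from Sym2.eq_swap] at h3
    rw [show s((5 : Fin 6), (4 : Fin 6)) = s(4, 5) from Sym2.eq_swap,
        show s((4 : Fin 6), (1 : Fin 6)) = s(1, 4) from Sym2.eq_swap] at h4
    rw [show s((3 : Fin 6), (0 : Fin 6)) = s(0, 3) from Sym2.eq_swap] at h5
    have hmt : δ s(0, 1) = true ∨ δ s(1, 2) = true ∨ δ s(0, 2) = true ∨ δ s(3, 4) = true ∨
        δ s(4, 5) = true ∨ δ s(3, 5) = true ∨ δ s(0, 3) = true ∨ δ s(1, 4) = true ∨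
        δ s(2, 5) = true := by
      have hm := (prism_mem_edgeSet et).1 het
      simp only [prismE, Finset.mem_insert, Finset.mem_singleton] at hm
      rcases hm with h | h | h | h | h | h | h | h | h <;> rw [h] at hett <;> tauto
    have hmf : δ s(0, 1) = false ∨ δ s(1, 2) = false ∨ δ s(0, 2) = false ∨ δ s(3, 4) = false ∨
        δ s(4, 5) = false ∨ δ s(3, 5) = false ∨ δ s(0, 3) = false ∨ δ s(1, 4) = false ∨
        δ s(2, 5) = false := by
      have hm := (prism_mem_edgeSet ef).1 hef
      simp only [prismE, Finset.mem_insert, Finset.mem_singleton] at hm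
      rcases hm with h | h | h | h | h | h | h | h | h <;> rw [h] at heff <;> tauto
    have hgoal : (∀ e ∈ prismE, δ e = prismColoring e) ∨
        (∀ e ∈ prismE, δ e = !(prismColoring e)) := by
      clear het hef hett heff hcyc
      simp only [prismE, Finset.forall_mem_insert, Finset.mem_singleton, forall_eq]
      rw [show prismColoring s(0, 1) = true from by decide,
          show prismColoring s(1, 2) = true from by decide,
          show prismColoring s(0, 2) = true from by decide,
          show prismColoring s(3, 4) = true from by decide,
          show prismColoring s(4, 5) = true from by decide,
          show prismColoring s(3, 5) = true from by decide,
          show prismColoring s(0, 3) = false from by decide,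
          show prismColoring s(1, 4) = false from by decide,
          show prismColoring s(2, 5) = false from by decide]
      revert h1 h2 h3 h4 h5 hmt hmf
      generalize δ s(0, 1) = x1
      generalize δ s(1, 2) = x2
      generalize δ s(0, 2) = x3
      generalize δ s(3, 4) = x4
      generalize δ s(4, 5) = x5
      generalize δ s(3, 5) = x6
      generalize δ s(0, 3) = x7
      generalize δ s(1, 4) = x8
      generalize δ s(2, 5) = x9
      revert x1 x2 x3 x4 x5 x6 x7 x8 x9
      decide
    exact hgoal.imp (fun h e he => h e ((prism_mem_edgeSet e).1 he))
      (fun h e he => h e ((prism_mem_edgeSet e).1 he))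
  · intro h
    have hmem1 : s((0 : Fin 6), (1 : Fin 6)) ∈ prism.edgeSet :=
      (prism_mem_edgeSet _).2 (by decide)
    have hmem2 : s((0 : Fin 6), (3 : Fin 6)) ∈ prism.edgeSet :=
      (prism_mem_edgeSet _).2 (by decide)
    rcases h with h | h
    · refine ⟨⟨s(0, 1), hmem1, by rw [h _ hmem1]; decide⟩,
        ⟨s(0, 3), hmem2, by rw [h _ hmem2]; decide⟩, ?_⟩
      intro u w hw b
      have hc : (w.edges.countP fun e => δ e == b)
          = (w.edges.countP fun e => prismColoring e == b) :=
        List.countP_congr (fun x hx => by rw [h x (w.edges_subset_edgeSet hx)])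
      rw [hc]
      exact prism_NAC w hw b
    · refine ⟨⟨s(0, 3), hmem2, by rw [h _ hmem2]; decide⟩,
        ⟨s(0, 1), hmem1, by rw [h _ hmem1]; decide⟩, ?_⟩
      intro u w hw b
      have hc : (w.edges.countP fun e => δ e == b)
          = (w.edges.countP fun e => prismColoring e == !b) :=
        List.countP_congr (fun x hx => by
          rw [h x (w.edges_subset_edgeSet hx)]
          cases prismColoring x <;> cases b <;> rfl)
      rw [hc]
      exact prism_NAC w hw (!b)
end

section
/- The 3-prism graph has no stable cut, yet it has a NAC-coloring; hence existence of a stable cut is strictly stronger than existence of a NAC-coloring. -/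
open SimpleGraph

/-!
Removing an independent set from the prism leaves at most one vertex of each triangle
missing, so by pigeonhole some matching edge `i (i+3)` survives; every vertex lies in one of
its two triangles, hence is equal or adjacent to an end of that edge.

For the coloring, both color classes are cuts: triangle edges are exactly the edges changing
the position `x % 3`, matching edges exactly those changing the side `x / 3`. Along a closed
walk containing exactly one edge of a cut, the separating function would change exactly
once, which is impossible.
-/

namespace SimpleGraph

variable {V : Type*} {G : SimpleGraph V}

theorem preconnected_induce_compl_of_dominating_edge {S : Set V} {x y : V} (hxy : G.Adj x y)
    (hx : x ∉ S) (hy : y ∉ S) (hdom : ∀ v, v = x ∨ G.Adj v x ∨ v = y ∨ G.Adj v y) :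
    (G.induce Sᶜ).Preconnected := by
  let x' : ↥Sᶜ := ⟨x, hx⟩
  let y' : ↥Sᶜ := ⟨y, hy⟩
  have hyx : (G.induce Sᶜ).Adj y' x' := induce_adj.mpr hxy.symm
  have hreach : ∀ v, (G.induce Sᶜ).Reachable v x' := by
    rintro ⟨v, hv⟩
    rcases hdom v with rfl | hvx | rfl | hvy
    · rfl
    · exact (induce_adj.mpr hvx : (G.induce Sᶜ).Adj ⟨v, hv⟩ x').reachable
    · exact hyx.reachable
    · exact (induce_adj.mpr hvy : (G.induce Sᶜ).Adj ⟨v, hv⟩ y').reachable.trans hyx.reachable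
  exact fun u v => (hreach u).trans (hreach v).symm

variable {A : Type*} {δ : Sym2 V → Bool} {b : Bool} {φ : V → A}

theorem Walk.apply_eq_iff_countP_eq_zero
    (hφ : ∀ u v, G.Adj u v → (δ s(u, v) = b ↔ φ u ≠ φ v)) {u v : V} (w : G.Walk u v)
    (hw : (w.edges.countP fun e => δ e == b) ≤ 1) :
    φ u = φ v ↔ (w.edges.countP fun e => δ e == b) = 0 := by
  induction w with
  | nil => simp
  | @cons a c _ hac p ih =>
    rw [Walk.edges_cons, List.countP_cons] at hw ⊢
    by_cases hcolor : δ s(a, c) = b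
    · have hne : φ a ≠ φ c := (hφ a c hac).mp hcolor
      simp only [hcolor, beq_self_eq_true, if_true] at hw ⊢
      rw [(ih (by omega)).mpr (by omega)] at hne
      simpa using hne
    · have heq : φ a = φ c := not_not.mp (mt (hφ a c hac).mpr hcolor)
      simp only [heq, beq_false_of_ne hcolor] at hw ⊢
      exact ih (by simpa using hw)

theorem isNACColoring_of_separating (htrue : ∃ e ∈ G.edgeSet, δ e = true)
    (hfalse : ∃ e ∈ G.edgeSet, δ e = false) (φ : Bool → V → A)
    (hφ : ∀ b u v, G.Adj u v → (δ s(u, v) = b ↔ φ b u ≠ φ b v)) :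
    IsNACColoring G δ :=
  ⟨htrue, hfalse, fun _ w _ b h =>
    by simpa [h] using (w.apply_eq_iff_countP_eq_zero (hφ b) h.le).mp rfl⟩

end SimpleGraph

instance : DecidableRel prism.Adj := fun u v =>
  decidable_of_iff (s(u, v) ∈ ({s(0, 1), s(1, 2), s(0, 2), s(3, 4), s(4, 5), s(3, 5),
      s(0, 3), s(1, 4), s(2, 5)} : Finset (Sym2 (Fin 6))) ∧ u ≠ v) (by
    simp [prism, SimpleGraph.fromEdgeSet_adj])

theorem prism_matching_edge_dominating :
    ∀ i : Fin 6, i < 3 → prism.Adj i (i + 3) ∧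
      ∀ v, v = i ∨ prism.Adj v i ∨ v = i + 3 ∨ prism.Adj v (i + 3) := by
  decide

theorem prism_independent_avoids_matching_edge {S : Set (Fin 6)}
    (hS : ∀ u ∈ S, ∀ v ∈ S, ¬ prism.Adj u v) :
    ∃ i : Fin 6, i < 3 ∧ i ∉ S ∧ i + 3 ∉ S := by
  by_contra! hcover
  have h0 : 0 ∈ S ∨ 3 ∈ S := or_iff_not_imp_left.mpr (hcover 0 (by decide))
  have h1 : 1 ∈ S ∨ 4 ∈ S := or_iff_not_imp_left.mpr (hcover 1 (by decide))
  have h2 : 2 ∈ S ∨ 5 ∈ S := or_iff_not_imp_left.mpr (hcover 2 (by decide))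
  have triangles : prism.Adj 0 1 ∧ prism.Adj 0 2 ∧ prism.Adj 1 2 ∧
      prism.Adj 3 4 ∧ prism.Adj 3 5 ∧ prism.Adj 4 5 := by decide
  tauto

theorem prism_preconnected_induce_compl {S : Set (Fin 6)}
    (hS : ∀ u ∈ S, ∀ v ∈ S, ¬ prism.Adj u v) : (prism.induce Sᶜ).Preconnected := by
  obtain ⟨i, hi, hiS, hi3S⟩ := prism_independent_avoids_matching_edge hS
  obtain ⟨hadj, hdom⟩ := prism_matching_edge_dominating i hi
  exact preconnected_induce_compl_of_dominating_edge hadj hiS hi3S hdom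

theorem prismColoring_eq_iff :
    ∀ b u v, prism.Adj u v →
      (prismColoring s(u, v) = b ↔ (if b then u.val % 3 else u.val / 3) ≠
        (if b then v.val % 3 else v.val / 3)) := by
  decide

theorem isNACColoring_prismColoring : IsNACColoring prism prismColoring :=
  isNACColoring_of_separating ⟨s(0, 1), by rw [mem_edgeSet]; decide, by decide⟩
    ⟨s(0, 3), by rw [mem_edgeSet]; decide, by decide⟩ _ prismColoring_eq_iff

/-- the 3-prism has no stable cut, yet it has a NAC-coloring. -/
theorem prism_no_stableCut_but_NAC :
    (¬ ∃ S : Set (Fin 6),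
        (∀ u ∈ S, ∀ v ∈ S, ¬ prism.Adj u v) ∧
          ∃ u v : ↥(Sᶜ), ¬ (prism.induce Sᶜ).Reachable u v) ∧
      ∃ δ : Sym2 (Fin 6) → Bool, IsNACColoring prism δ := by
  refine ⟨fun ⟨S, hS, u, v, huv⟩ => huv (prism_preconnected_induce_compl hS u v),
    prismColoring, isNACColoring_prismColoring⟩
end

section
/- In a braced ladder (a ladder graph in which every 4-cycle has one diagonal added), all edges belong to a single △-connected component; consequently every braced ladder is monochromatic in every NAC-coloring of any graph containing it as a subgraph. -/
open SimpleGraph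

/-- The braced ladder with columns `0, …, n`: rungs `(i,false)(i,true)`, rails
`(i,b)(i+1,b)` and, in each 4-cycle, one diagonal whose direction is given by `d i`. -/
def bracedLadder (n : ℕ) (d : ℕ → Bool) : SimpleGraph (ℕ × Bool) :=
  SimpleGraph.fromEdgeSet
    ({e | ∃ i ≤ n, e = s((i, false), (i, true))} ∪
      {e | ∃ i < n, ∃ b : Bool, e = s((i, b), (i + 1, b))} ∪
      {e | ∃ i < n,
        e = if d i then s((i, false), (i + 1, true)) else s((i, true), (i + 1, false))})

/-!
A diagonal cuts each square of the ladder into two triangles, which link rung `i`, both rails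
of the square, the diagonal and rung `i + 1`; chaining the squares links every edge to rung `0`.
A NAC-coloring is constant on each triangle, since a triangle with exactly one edge of some
colour is an almost monochromatic cycle, hence constant along △-chains; a graph homomorphism
maps triangles to triangles, so this transfers to any graph the ladder maps into.
-/

section NAC

variable {V W : Type*} {G : SimpleGraph V} {H : SimpleGraph W} {δ : Sym2 W → Bool}

instance : Std.Symm (triRel G) where
  symm _ _ := fun ⟨a, b, c, hab, hbc, hca, h₁, h₂⟩ => ⟨a, b, c, hab, hbc, hca, h₂, h₁⟩

theorem triRel.map (φ : G →g H) {e₁ e₂ : Sym2 V} (h : triRel G e₁ e₂) :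
    triRel H (e₁.map φ) (e₂.map φ) := by
  obtain ⟨a, b, c, hab, hbc, hca, h₁, h₂⟩ := h
  refine ⟨φ a, φ b, φ c, φ.map_adj hab, φ.map_adj hbc, φ.map_adj hca, ?_, ?_⟩
  · rcases h₁ with rfl | rfl | rfl <;> simp
  · rcases h₂ with rfl | rfl | rfl <;> simp

theorem IsNACColoring.triangle_eq (hδ : IsNACColoring H δ) {a b c : W}
    (hab : H.Adj a b) (hbc : H.Adj b c) (hca : H.Adj c a) :
    δ s(a, b) = δ s(c, a) ∧ δ s(b, c) = δ s(c, a) := by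
  have hcycle : (Walk.cons hab (.cons hbc (.cons hca .nil))).IsCycle := by
    rw [Walk.cons_isCycle_iff]
    simp [hab.ne, hbc.ne, hca.ne, hab.ne', hca.ne']
  have hcount := hδ.2.2 _ hcycle
  simp only [Walk.edges_cons, Walk.edges_nil, List.countP_cons, List.countP_nil] at hcount
  revert hcount
  generalize δ s(a, b) = x; generalize δ s(b, c) = y; generalize δ s(c, a) = z
  decide +revert

theorem IsNACColoring.eq_of_triRel (hδ : IsNACColoring H δ) {e₁ e₂ : Sym2 W}
    (h : triRel H e₁ e₂) : δ e₁ = δ e₂ := by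
  obtain ⟨a, b, c, hab, hbc, hca, h₁, h₂⟩ := h
  obtain ⟨hab_ca, hbc_ca⟩ := hδ.triangle_eq hab hbc hca
  rcases h₁ with rfl | rfl | rfl <;> rcases h₂ with rfl | rfl | rfl <;> simp only [hab_ca, hbc_ca]

theorem IsNACColoring.map_eq_of_reflTransGen (hδ : IsNACColoring H δ) (φ : G →g H)
    {e₁ e₂ : Sym2 V} (h : Relation.ReflTransGen (triRel G) e₁ e₂) :
    δ (e₁.map φ) = δ (e₂.map φ) := by
  induction h with
  | refl => rfl
  | tail _ hrel ih => exact ih.trans (hδ.eq_of_triRel (hrel.map φ))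

end NAC

section BracedLadder

variable {n : ℕ} {d : ℕ → Bool} {i : ℕ}

theorem Sym2.mk_not_eq_mk_false_true {α : Type*} (x : α) (b : Bool) :
    s((x, !b), (x, b)) = s((x, false), (x, true)) := by
  cases b
  · exact Sym2.eq_swap
  · rfl

theorem bracedLadder_adj_rung (hi : i ≤ n) (b : Bool) :
    (bracedLadder n d).Adj (i, !b) (i, b) := by
  rw [bracedLadder, fromEdgeSet_adj]
  exact ⟨Or.inl (Or.inl ⟨i, hi, Sym2.mk_not_eq_mk_false_true i b⟩), by simp⟩

theorem bracedLadder_adj_rail (hi : i < n) (b : Bool) :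
    (bracedLadder n d).Adj (i, b) (i + 1, b) := by
  rw [bracedLadder, fromEdgeSet_adj]
  exact ⟨Or.inl (Or.inr ⟨i, hi, b, rfl⟩), by simp⟩

theorem bracedLadder_diagonal_eq (d : ℕ → Bool) (i : ℕ) :
    (if d i then s(((i, false) : ℕ × Bool), (i + 1, true)) else s((i, true), (i + 1, false))) =
      s((i, !d i), (i + 1, d i)) := by
  cases d i <;> rfl

theorem bracedLadder_adj_diagonal (hi : i < n) :
    (bracedLadder n d).Adj (i, !d i) (i + 1, d i) := by
  rw [bracedLadder, fromEdgeSet_adj]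
  exact ⟨Or.inr ⟨i, hi, (bracedLadder_diagonal_eq d i).symm⟩, by simp⟩

theorem bracedLadder_square (hi : i < n) :
    Relation.ReflTransGen (triRel (bracedLadder n d)) s((i, false), (i, true))
      s((i, !d i), (i + 1, d i)) ∧
    (∀ b, Relation.ReflTransGen (triRel (bracedLadder n d)) s((i, false), (i, true))
      s((i, b), (i + 1, b))) ∧
    Relation.ReflTransGen (triRel (bracedLadder n d)) s((i, false), (i, true))
      s((i + 1, false), (i + 1, true)) := by
  set b := d i
  have hdiag : (bracedLadder n d).Adj (i, !b) (i + 1, b) := bracedLadder_adj_diagonal hi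
  have tri₁ : ∀ e ∈ [s((i, !b), (i + 1, b)), s((i, b), (i + 1, b))],
      triRel (bracedLadder n d) s((i, false), (i, true)) e := by
    intro e he
    refine ⟨(i, !b), (i, b), (i + 1, b), bracedLadder_adj_rung hi.le b,
      bracedLadder_adj_rail hi b, hdiag.symm, by simp [Sym2.mk_not_eq_mk_false_true], ?_⟩
    simp only [List.mem_cons, List.not_mem_nil, or_false] at he
    rcases he with rfl | rfl <;> simp [Sym2.eq_swap]
  have tri₂ : ∀ e ∈ [s((i, !b), (i + 1, !b)), s((i + 1, false), (i + 1, true))],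
      triRel (bracedLadder n d) s((i, !b), (i + 1, b)) e := by
    intro e he
    refine ⟨(i, !b), (i + 1, !b), (i + 1, b), bracedLadder_adj_rail hi (!b),
      bracedLadder_adj_rung hi b, hdiag.symm, by simp [Sym2.eq_swap], ?_⟩
    simp only [List.mem_cons, List.not_mem_nil, or_false] at he
    rcases he with rfl | rfl <;> simp [Sym2.mk_not_eq_mk_false_true]
  have h_diag : Relation.ReflTransGen (triRel (bracedLadder n d)) s((i, false), (i, true))
      s((i, !b), (i + 1, b)) := .single (tri₁ _ (by simp))
  refine ⟨h_diag, fun c => ?_, h_diag.tail (tri₂ _ (by simp))⟩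
  rcases Bool.eq_or_eq_not c b with rfl | rfl
  · exact .single (tri₁ _ (by simp))
  · exact h_diag.tail (tri₂ _ (by simp))

theorem bracedLadder_reflTransGen_rung (hi : i ≤ n) :
    Relation.ReflTransGen (triRel (bracedLadder n d)) s((0, false), (0, true))
      s((i, false), (i, true)) := by
  induction i with
  | zero => rfl
  | succ i ih => exact (ih (by omega)).trans (bracedLadder_square hi).2.2

theorem bracedLadder_reflTransGen_of_mem_edgeSet {e : Sym2 (ℕ × Bool)}
    (he : e ∈ (bracedLadder n d).edgeSet) :
    Relation.ReflTransGen (triRel (bracedLadder n d)) s((0, false), (0, true)) e := by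
  rw [bracedLadder, edgeSet_fromEdgeSet] at he
  rcases he.1 with (⟨i, hi, rfl⟩ | ⟨i, hi, b, rfl⟩) | ⟨i, hi, rfl⟩
  · exact bracedLadder_reflTransGen_rung hi
  · exact (bracedLadder_reflTransGen_rung hi.le).trans ((bracedLadder_square hi).2.1 b)
  · rw [bracedLadder_diagonal_eq]
    exact (bracedLadder_reflTransGen_rung hi.le).trans (bracedLadder_square hi).1

theorem bracedLadder_reflTransGen {e₁ e₂ : Sym2 (ℕ × Bool)}
    (h₁ : e₁ ∈ (bracedLadder n d).edgeSet) (h₂ : e₂ ∈ (bracedLadder n d).edgeSet) :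
    Relation.ReflTransGen (triRel (bracedLadder n d)) e₁ e₂ :=
  (symm (bracedLadder_reflTransGen_of_mem_edgeSet h₁)).trans
    (bracedLadder_reflTransGen_of_mem_edgeSet h₂)

end BracedLadder

/-- all edges of a braced ladder lie in a single △-connected component;
consequently, in every NAC-coloring of any graph containing a braced ladder as a
subgraph, all edges of the braced ladder are monochromatic. -/
theorem bracedLadder_monochromatic (n : ℕ) (d : ℕ → Bool) :
    (∀ e₁ ∈ (bracedLadder n d).edgeSet, ∀ e₂ ∈ (bracedLadder n d).edgeSet,
      Relation.ReflTransGen (triRel (bracedLadder n d)) e₁ e₂) ∧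
    (∀ {W : Type*} (H : SimpleGraph W) (φ : bracedLadder n d →g H),
      Function.Injective φ → ∀ δ : Sym2 W → Bool, IsNACColoring H δ →
        ∀ e₁ ∈ (bracedLadder n d).edgeSet, ∀ e₂ ∈ (bracedLadder n d).edgeSet,
          δ (e₁.map φ) = δ (e₂.map φ)) :=
  ⟨fun _ h₁ _ h₂ => bracedLadder_reflTransGen h₁ h₂,
    fun _ φ _ _ hδ _ h₁ _ h₂ => hδ.map_eq_of_reflTransGen φ (bracedLadder_reflTransGen h₁ h₂)⟩
end
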